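/- Let d ≥ 1, let Q be a nonzero homogeneous polynomial of degree m ≥ 1 in d variables with complex coefficients, let y ∈ ℝ^d with σ_Q(y) = 0, and let R be a polynomial in d variables with complex coefficients of total degree at most 4m − 1. Set P := Q⁴ + R. Then σ⁰_P(y) = 0. -/

import Mathlib

open MvPolynomial Filter Finset

noncomputable section

/-- Evaluation of a complex-coefficient polynomial at a real point. -/
def evalR {d : ℕ} (P : MvPolynomial (Fin d) ℂ) (ξ : EuclideanSpace ℝ (Fin d)) : ℂ :=
  eval (fun i => (ξ i : ℂ)) P

/-- `P̃_V(ξ,t) = sup {|P(ξ+η)| : η ∈ V, |η| ≤ t}`. -/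
def PtildeV {d : ℕ} (P : MvPolynomial (Fin d) ℂ) (V : Submodule ℝ (EuclideanSpace ℝ (Fin d)))
    (ξ : EuclideanSpace ℝ (Fin d)) (t : ℝ) : ℝ :=
  sSup {r : ℝ | ∃ η ∈ V, ‖η‖ ≤ t ∧ r = ‖evalR P (ξ + η)‖}

/-- `P̃(ξ,t) = P̃_{ℝ^d}(ξ,t)`. -/
def Ptilde {d : ℕ} (P : MvPolynomial (Fin d) ℂ) (ξ : EuclideanSpace ℝ (Fin d)) (t : ℝ) : ℝ :=
  PtildeV P ⊤ ξ t

/-- `σ⁰_P(V)`. -/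
def sigma0 {d : ℕ} (P : MvPolynomial (Fin d) ℂ) (V : Submodule ℝ (EuclideanSpace ℝ (Fin d))) : ℝ :=
  sInf {r : ℝ | ∃ t > (1:ℝ), ∃ ξ, r = PtildeV P V ξ t / Ptilde P ξ t}

/-- `σ_P(V)`. -/
def sigma {d : ℕ} (P : MvPolynomial (Fin d) ℂ) (V : Submodule ℝ (EuclideanSpace ℝ (Fin d))) : ℝ :=
  sInf {r : ℝ | ∃ t > (1:ℝ), r = liminf (fun ξ => PtildeV P V ξ t / Ptilde P ξ t)
    (Bornology.cobounded (EuclideanSpace ℝ (Fin d)))}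

/-- Multi-index partial derivative `∂^α P`. -/
def pd {d : ℕ} (α : Fin d → ℕ) (P : MvPolynomial (Fin d) ℂ) : MvPolynomial (Fin d) ℂ :=
  ((List.ofFn fun i : Fin d =>
      ((pderiv i).toLinearMap ^ α i : Module.End ℂ (MvPolynomial (Fin d) ℂ))).prod) P

/-- The finset of multi-indices `α` with `k ≤ |α| ≤ m`. -/
def midx (d m k : ℕ) : Finset (Fin d → ℕ) :=
  (Fintype.piFinset fun _ : Fin d => Finset.range (m+1)).filter fun α => k ≤ ∑ i, α i ∧ ∑ i, α i ≤ m

/-- `⟨∇P(ξ), x⟩ = Σ_j ∂_j P(ξ) x_j`. -/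
def gradPair {d : ℕ} (P : MvPolynomial (Fin d) ℂ) (ξ x : EuclideanSpace ℝ (Fin d)) : ℂ :=
  ∑ j, evalR (pderiv j P) ξ * (x j : ℂ)

/-- `|∇P(ξ)|`, the Euclidean norm of the gradient. -/
def gradNorm {d : ℕ} (P : MvPolynomial (Fin d) ℂ) (ξ : EuclideanSpace ℝ (Fin d)) : ℝ :=
  Real.sqrt (∑ j, ‖evalR (pderiv j P) ξ‖ ^ 2)

/-! Homogeneity gives `Q̃_V(cξ, ct) = c^m Q̃_V(ξ, t)` for every subspace `V`, while
`R̃(cξ, ct) = O(c^(4m-1))`. Since taking sups is `1`-Lipschitz, `|P̃_V - Q̃_V⁴| ≤ R̃_V`, so after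
dividing by `c^(4m)` the ratio `P̃_V(cξ, ct) / P̃(cξ, ct)` tends to `(Q̃_V(ξ, t) / Q̃(ξ, t))⁴` as
`c → ∞`. Hence `σ⁰_P(V)` is bounded by the fourth power of every ratio of `Q`, and these ratios
get arbitrarily small because `σ⁰_Q(V) ≤ σ_Q(V) = 0`. The limit needs `Q̃(ξ, t) > 0`, which holds
because a nonzero polynomial is analytic and so cannot vanish on a ball. -/

open Topology

variable {d : ℕ}

lemma exists_norm_evalR_le (P : MvPolynomial (Fin d) ℂ) :
    ∃ C, 0 ≤ C ∧ ∀ x, ‖evalR P x‖ ≤ C * (1 + ‖x‖) ^ P.totalDegree := by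
  refine ⟨∑ s ∈ P.support, ‖P.coeff s‖, by positivity, fun x => ?_⟩
  have hx : 1 ≤ 1 + ‖x‖ := le_add_of_nonneg_right (norm_nonneg x)
  rw [evalR, eval_eq, Finset.sum_mul]
  refine (norm_sum_le _ _).trans (Finset.sum_le_sum fun s hs => ?_)
  rw [norm_mul]
  gcongr
  calc ‖∏ i ∈ s.support, (x i : ℂ) ^ s i‖
      = ∏ i ∈ s.support, ‖x i‖ ^ s i := by simp [norm_prod]
    _ ≤ ∏ i ∈ s.support, (1 + ‖x‖) ^ s i := by
        gcongr with i
        exact (PiLp.norm_apply_le x i).trans (le_add_of_nonneg_left zero_le_one)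
    _ = (1 + ‖x‖) ^ ∑ i ∈ s.support, s i := Finset.prod_pow_eq_pow_sum _ _ _
    _ ≤ (1 + ‖x‖) ^ P.totalDegree := pow_le_pow_right₀ hx (le_totalDegree hs)

lemma evalR_add (P R : MvPolynomial (Fin d) ℂ) (x : EuclideanSpace ℝ (Fin d)) :
    evalR (P + R) x = evalR P x + evalR R x :=
  map_add _ _ _

lemma evalR_pow (P : MvPolynomial (Fin d) ℂ) (k : ℕ) (x : EuclideanSpace ℝ (Fin d)) :
    evalR (P ^ k) x = evalR P x ^ k :=
  map_pow _ _ _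

lemma analyticOnNhd_evalR (P : MvPolynomial (Fin d) ℂ) :
    AnalyticOnNhd ℝ (evalR P) Set.univ :=
  (AnalyticOnNhd.eval_continuousLinearMap' (𝕜 := ℝ)
    (fun i => Complex.ofRealCLM.comp (EuclideanSpace.proj i)) P :)

lemma eq_zero_of_evalR_eq_zero {P : MvPolynomial (Fin d) ℂ} (h : ∀ x, evalR P x = 0) :
    P = 0 := by
  refine funext_set (fun _ => Set.range ((↑) : ℝ → ℂ))
    (fun _ => Set.infinite_range_of_injective Complex.ofReal_injective) fun z hz => ?_
  choose x hx using fun i => hz i (Set.mem_univ i)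
  have hz : z = fun i => ((WithLp.toLp 2 x : EuclideanSpace ℝ (Fin d)) i : ℂ) :=
    funext fun i => (hx i).symm
  rw [hz, map_zero]
  exact h _

lemma evalR_smul_of_isHomogeneous {n : ℕ} {Q : MvPolynomial (Fin d) ℂ}
    (hQ : Q.IsHomogeneous n) (c : ℝ) (x : EuclideanSpace ℝ (Fin d)) :
    evalR Q (c • x) = (c : ℂ) ^ n * evalR Q x := by
  simp only [evalR, PiLp.smul_apply, smul_eq_mul, Complex.ofReal_mul]
  rw [eval_eq, eval_eq, Finset.mul_sum]
  refine Finset.sum_congr rfl fun s hs => ?_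
  have hdeg : ∑ i ∈ s.support, s i = n := by
    rw [← Finsupp.degree_apply, Finsupp.degree_eq_weight_one]
    exact hQ (mem_support_iff.mp hs)
  simp_rw [mul_pow, Finset.prod_mul_distrib, Finset.prod_pow_eq_pow_sum, hdeg]
  ring

lemma norm_evalR_smul_of_isHomogeneous {n : ℕ} {Q : MvPolynomial (Fin d) ℂ}
    (hQ : Q.IsHomogeneous n) {c : ℝ} (hc : 0 ≤ c) (x : EuclideanSpace ℝ (Fin d)) :
    ‖evalR Q (c • x)‖ = c ^ n * ‖evalR Q x‖ := by
  rw [evalR_smul_of_isHomogeneous hQ, norm_mul, norm_pow, Complex.norm_real,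
    Real.norm_of_nonneg hc]

section Sup

variable (P Q R : MvPolynomial (Fin d) ℂ) (V : Submodule ℝ (EuclideanSpace ℝ (Fin d)))
  (ξ : EuclideanSpace ℝ (Fin d)) {t : ℝ}

lemma isGreatest_PtildeV (ht : 0 ≤ t) :
    IsGreatest {r : ℝ | ∃ η ∈ V, ‖η‖ ≤ t ∧ r = ‖evalR P (ξ + η)‖} (PtildeV P V ξ t) := by
  have hK : IsCompact ((V : Set (EuclideanSpace ℝ (Fin d))) ∩ Metric.closedBall 0 t) :=
    (isCompact_closedBall 0 t).inter_left V.closed_of_finiteDimensional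
  have hcont : Continuous fun η => ‖evalR P (ξ + η)‖ :=
    ((analyticOnNhd_evalR P).continuousOn.comp_continuous (continuous_const.add continuous_id)
      fun _ => Set.mem_univ _).norm
  obtain ⟨η₀, ⟨hη₀V, hη₀t⟩, hmax⟩ :=
    hK.exists_isMaxOn ⟨0, V.zero_mem, by simpa using ht⟩ hcont.continuousOn
  have h : IsGreatest {r : ℝ | ∃ η ∈ V, ‖η‖ ≤ t ∧ r = ‖evalR P (ξ + η)‖}
      ‖evalR P (ξ + η₀)‖ := by
    refine ⟨⟨η₀, hη₀V, by simpa using hη₀t, rfl⟩, ?_⟩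
    rintro _ ⟨η, hηV, hηt, rfl⟩
    exact hmax ⟨hηV, by simpa using hηt⟩
  rwa [PtildeV, h.csSup_eq]

variable {P V ξ}

lemma le_PtildeV {η : EuclideanSpace ℝ (Fin d)} (ht : 0 ≤ t) (hη : η ∈ V) (hηt : ‖η‖ ≤ t) :
    ‖evalR P (ξ + η)‖ ≤ PtildeV P V ξ t :=
  (isGreatest_PtildeV P V ξ ht).2 ⟨η, hη, hηt, rfl⟩

lemma PtildeV_le {c : ℝ} (ht : 0 ≤ t) (h : ∀ η ∈ V, ‖η‖ ≤ t → ‖evalR P (ξ + η)‖ ≤ c) :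
    PtildeV P V ξ t ≤ c := by
  obtain ⟨η, hη, hηt, heq⟩ := (isGreatest_PtildeV P V ξ ht).1
  exact heq ▸ h η hη hηt

variable (P V ξ t)

lemma PtildeV_nonneg : 0 ≤ PtildeV P V ξ t :=
  Real.sSup_nonneg fun _ ⟨_, _, _, hr⟩ => hr ▸ norm_nonneg _

lemma PtildeV_le_Ptilde (ht : 0 ≤ t) : PtildeV P V ξ t ≤ Ptilde P ξ t :=
  PtildeV_le ht fun _ _ hηt => le_PtildeV ht trivial hηt

lemma PtildeV_div_Ptilde_nonneg : 0 ≤ PtildeV P V ξ t / Ptilde P ξ t :=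
  div_nonneg (PtildeV_nonneg P V ξ t) (PtildeV_nonneg P ⊤ ξ t)

lemma PtildeV_div_Ptilde_le_one (ht : 0 ≤ t) : PtildeV P V ξ t / Ptilde P ξ t ≤ 1 :=
  div_le_one_of_le₀ (PtildeV_le_Ptilde P V ξ t ht) (PtildeV_nonneg P ⊤ ξ t)

variable {t}

lemma abs_PtildeV_add_sub_le (ht : 0 ≤ t) :
    |PtildeV (P + R) V ξ t - PtildeV P V ξ t| ≤ PtildeV R V ξ t := by
  refine abs_sub_le_iff.mpr ⟨?_, ?_⟩ <;> rw [sub_le_iff_le_add']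
  · refine PtildeV_le ht fun η hη hηt => ?_
    rw [evalR_add]
    exact (norm_add_le _ _).trans (add_le_add (le_PtildeV ht hη hηt) (le_PtildeV ht hη hηt))
  · refine PtildeV_le ht fun η hη hηt => ?_
    rw [← add_sub_cancel_right (evalR P (ξ + η)) (evalR R (ξ + η)), ← evalR_add]
    exact (norm_sub_le _ _).trans (add_le_add (le_PtildeV ht hη hηt) (le_PtildeV ht hη hηt))

lemma PtildeV_pow (k : ℕ) (ht : 0 ≤ t) : PtildeV (Q ^ k) V ξ t = PtildeV Q V ξ t ^ k := by
  refine le_antisymm (PtildeV_le ht fun η hη hηt => ?_) ?_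
  · rw [evalR_pow, norm_pow]
    exact pow_le_pow_left₀ (norm_nonneg _) (le_PtildeV ht hη hηt) k
  · obtain ⟨η, hη, hηt, heq⟩ := (isGreatest_PtildeV Q V ξ ht).1
    rw [heq, ← norm_pow, ← evalR_pow]
    exact le_PtildeV ht hη hηt

end Sup

lemma Ptilde_pos {Q : MvPolynomial (Fin d) ℂ} (hQ0 : Q ≠ 0) (ξ : EuclideanSpace ℝ (Fin d))
    {t : ℝ} (ht : 0 < t) : 0 < Ptilde Q ξ t := by
  by_contra! h
  have hball : ∀ x ∈ Metric.closedBall ξ t, evalR Q x = 0 := fun x hx => by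
    have hx' := le_PtildeV (P := Q) (V := ⊤) (ξ := ξ) ht.le trivial
      (mem_closedBall_iff_norm.mp hx)
    rw [add_sub_cancel] at hx'
    exact norm_le_zero_iff.mp (hx'.trans h)
  refine hQ0 (eq_zero_of_evalR_eq_zero fun x => ?_)
  exact (analyticOnNhd_evalR Q).eqOn_zero_of_preconnected_of_eventuallyEq_zero
    isPreconnected_univ (Set.mem_univ ξ)
    (eventually_of_mem (Metric.closedBall_mem_nhds ξ ht) hball) (Set.mem_univ x)

lemma PtildeV_smul_of_isHomogeneous {n : ℕ} {Q : MvPolynomial (Fin d) ℂ}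
    (hQ : Q.IsHomogeneous n) (V : Submodule ℝ (EuclideanSpace ℝ (Fin d)))
    (ξ : EuclideanSpace ℝ (Fin d)) {t c : ℝ} (ht : 0 ≤ t) (hc : 0 < c) :
    PtildeV Q V (c • ξ) (c * t) = c ^ n * PtildeV Q V ξ t := by
  refine le_antisymm (PtildeV_le (by positivity) fun η hη hηt => ?_) ?_
  · have hη' : ‖c⁻¹ • η‖ ≤ t := by
      rwa [norm_smul, Real.norm_of_nonneg (inv_nonneg.mpr hc.le), inv_mul_le_iff₀ hc]
    rw [← smul_inv_smul₀ hc.ne' η, ← smul_add, norm_evalR_smul_of_isHomogeneous hQ hc.le]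
    gcongr
    exact le_PtildeV ht (V.smul_mem _ hη) hη'
  · obtain ⟨η, hη, hηt, heq⟩ := (isGreatest_PtildeV Q V ξ ht).1
    rw [heq, ← norm_evalR_smul_of_isHomogeneous hQ hc.le, smul_add]
    refine le_PtildeV (by positivity) (V.smul_mem _ hη) ?_
    rw [norm_smul, Real.norm_of_nonneg hc.le]
    gcongr

lemma exists_PtildeV_smul_le (R : MvPolynomial (Fin d) ℂ)
    (V : Submodule ℝ (EuclideanSpace ℝ (Fin d))) (ξ : EuclideanSpace ℝ (Fin d)) {t : ℝ}
    (ht : 0 ≤ t) :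
    ∃ C, 0 ≤ C ∧ ∀ c ≥ (1 : ℝ), PtildeV R V (c • ξ) (c * t) ≤ C * c ^ R.totalDegree := by
  obtain ⟨C, hC0, hC⟩ := exists_norm_evalR_le R
  refine ⟨C * (1 + ‖ξ‖ + t) ^ R.totalDegree, by positivity, fun c hc => ?_⟩
  refine PtildeV_le (by positivity) fun η _ hηt => (hC _).trans ?_
  have hx : 1 + ‖c • ξ + η‖ ≤ c * (1 + ‖ξ‖ + t) := by
    have := norm_add_le (c • ξ) η
    rw [norm_smul, Real.norm_of_nonneg (by linarith)] at this
    nlinarith [norm_nonneg ξ]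
  rw [mul_assoc, ← mul_pow, mul_comm _ c]
  gcongr

theorem tendsto_PtildeV_pow_add_div {k m : ℕ} {Q R : MvPolynomial (Fin d) ℂ}
    (hQ : Q.IsHomogeneous m) (hR : R.totalDegree < k * m)
    (V : Submodule ℝ (EuclideanSpace ℝ (Fin d))) (ξ : EuclideanSpace ℝ (Fin d)) {t : ℝ}
    (ht : 0 ≤ t) :
    Tendsto (fun c : ℝ => PtildeV (Q ^ k + R) V (c • ξ) (c * t) / c ^ (k * m)) atTop
      (𝓝 (PtildeV Q V ξ t ^ k)) := by
  obtain ⟨C, hC0, hC⟩ := exists_PtildeV_smul_le R V ξ ht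
  have hbound : ∀ᶠ c in atTop,
      ‖PtildeV (Q ^ k + R) V (c • ξ) (c * t) / c ^ (k * m) - PtildeV Q V ξ t ^ k‖ ≤ C / c := by
    filter_upwards [eventually_ge_atTop 1] with c hc
    have hc0 : 0 < c := by linarith
    have hpow : 0 < c ^ (k * m) := by positivity
    have hQc : PtildeV Q V ξ t ^ k = PtildeV (Q ^ k) V (c • ξ) (c * t) / c ^ (k * m) := by
      rw [PtildeV_pow _ _ _ _ (by positivity), PtildeV_smul_of_isHomogeneous hQ V ξ ht hc0,
        mul_pow, ← pow_mul, mul_comm m k, mul_div_cancel_left₀ _ hpow.ne']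
    rw [hQc, ← sub_div, Real.norm_eq_abs, abs_div, abs_of_pos hpow, div_le_div_iff₀ hpow hc0]
    calc _ ≤ PtildeV R V (c • ξ) (c * t) * c :=
          mul_le_mul_of_nonneg_right (abs_PtildeV_add_sub_le _ _ _ _ (by positivity)) hc0.le
      _ ≤ C * c ^ R.totalDegree * c := mul_le_mul_of_nonneg_right (hC c hc) hc0.le
      _ ≤ C * c ^ (k * m) := by
          rw [mul_assoc, ← pow_succ]
          gcongr
          exact hR
  refine tendsto_iff_norm_sub_tendsto_zero.mpr (squeeze_zero' (Eventually.of_forall fun _ =>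
    norm_nonneg _) hbound ?_)
  exact tendsto_const_nhds.div_atTop tendsto_id

section Sigma

variable (P : MvPolynomial (Fin d) ℂ) (V : Submodule ℝ (EuclideanSpace ℝ (Fin d)))

lemma sigma0_nonneg : 0 ≤ sigma0 P V :=
  Real.sInf_nonneg fun _ ⟨_, _, ξ, hr⟩ => hr ▸ PtildeV_div_Ptilde_nonneg P V ξ _

lemma sigma0_le_div (ξ : EuclideanSpace ℝ (Fin d)) {t : ℝ} (ht : 1 < t) :
    sigma0 P V ≤ PtildeV P V ξ t / Ptilde P ξ t :=
  csInf_le ⟨0, fun _ ⟨_, _, ξ, hr⟩ => hr ▸ PtildeV_div_Ptilde_nonneg P V ξ _⟩ ⟨t, ht, ξ, rfl⟩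

lemma exists_div_lt_of_sigma0_lt {δ : ℝ} (h : sigma0 P V < δ) :
    ∃ t > (1 : ℝ), ∃ ξ, PtildeV P V ξ t / Ptilde P ξ t < δ := by
  obtain ⟨_, ⟨t, ht, ξ, rfl⟩, hr⟩ :=
    exists_lt_of_csInf_lt (s := {r | ∃ t > (1 : ℝ), ∃ ξ, r = PtildeV P V ξ t / Ptilde P ξ t})
      ⟨_, 2, one_lt_two, 0, rfl⟩ h
  exact ⟨t, ht, ξ, hr⟩

lemma sigma0_le_sigma [NeZero d] : sigma0 P V ≤ sigma P V := by
  refine le_csInf ⟨_, 2, one_lt_two, rfl⟩ ?_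
  rintro _ ⟨t, ht, rfl⟩
  exact le_liminf_of_le (isCoboundedUnder_ge_of_le _ fun ξ =>
    PtildeV_div_Ptilde_le_one P V ξ t (by linarith))
    (Eventually.of_forall fun ξ => sigma0_le_div P V ξ ht)

end Sigma

theorem sigma0_pow_add_le {k m : ℕ} {Q R : MvPolynomial (Fin d) ℂ} (hQ0 : Q ≠ 0)
    (hQ : Q.IsHomogeneous m) (hR : R.totalDegree < k * m)
    (V : Submodule ℝ (EuclideanSpace ℝ (Fin d))) (ξ : EuclideanSpace ℝ (Fin d)) {t : ℝ}
    (ht : 1 < t) :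
    sigma0 (Q ^ k + R) V ≤ (PtildeV Q V ξ t / Ptilde Q ξ t) ^ k := by
  have hA : Ptilde Q ξ t ^ k ≠ 0 := pow_ne_zero _ (Ptilde_pos hQ0 ξ (by linarith)).ne'
  have hlim := (tendsto_PtildeV_pow_add_div hQ hR V ξ (by linarith)).div
    (tendsto_PtildeV_pow_add_div hQ hR ⊤ ξ (by linarith)) hA
  rw [div_pow]
  refine ge_of_tendsto hlim ?_
  filter_upwards [eventually_ge_atTop 1] with c hc
  rw [Pi.div_apply, div_div_div_cancel_right₀ (by positivity)]
  exact sigma0_le_div _ V _ (by nlinarith)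

/-- If `Q` is a nonzero homogeneous polynomial of degree `m ≥ 1` with `σ_Q(y) = 0`, and
`R` has total degree at most `4m - 1`, then `P := Q⁴ + R` satisfies `σ⁰_P(y) = 0`. -/
theorem statement11 {d m : ℕ} (hd : 1 ≤ d) (hm : 1 ≤ m)
    (Q : MvPolynomial (Fin d) ℂ) (hQ0 : Q ≠ 0) (hQ : Q.IsHomogeneous m)
    (y : EuclideanSpace ℝ (Fin d)) (hy : sigma Q (Submodule.span ℝ {y}) = 0)
    (R : MvPolynomial (Fin d) ℂ) (hR : R.totalDegree ≤ 4 * m - 1)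
    (P : MvPolynomial (Fin d) ℂ) (hP : P = Q ^ 4 + R) :
    sigma0 P (Submodule.span ℝ {y}) = 0 := by
  subst hP
  have : NeZero d := ⟨by omega⟩
  set V := Submodule.span ℝ {y}
  refine le_antisymm (le_of_forall_gt fun δ hδ => ?_) (sigma0_nonneg _ V)
  obtain ⟨t, ht, ξ, hr⟩ :=
    exists_div_lt_of_sigma0_lt Q V ((hy ▸ sigma0_le_sigma Q V).trans_lt hδ)
  calc sigma0 (Q ^ 4 + R) V ≤ (PtildeV Q V ξ t / Ptilde Q ξ t) ^ 4 :=
        sigma0_pow_add_le hQ0 hQ (by omega) V ξ ht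
    _ ≤ PtildeV Q V ξ t / Ptilde Q ξ t :=
        pow_le_of_le_one (PtildeV_div_Ptilde_nonneg Q V ξ t)
          (PtildeV_div_Ptilde_le_one Q V ξ t (by linarith)) four_ne_zero
    _ < δ := hr
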